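/- Let m_P, m_Q ∈ ℝ with m_P ≠ m_Q and σ_P, σ_Q ≥ 0, and set a := m_P − m_Q. Then the infimum of H²(P,Q) over all pairs of Borel probability measures P, Q on ℝ with means m_P, m_Q and variances σ_P², σ_Q² is exactly 1 − √(1 − a²/(a² + (σ_P + σ_Q)²)), and this infimum is a minimum, attained by a pair of probability measures supported on a common two-point set. -/

import Mathlib

open MeasureTheory Real

/-- The squared Hellinger distance `H²(P,Q) = (1/2)∫(√p − √q)² dμ`, computed with
respect to the dominating measure `μ = P + Q`. -/
noncomputable def hellingerSq (P Q : Measure ℝ) : ℝ :=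
  (1 / 2) * ∫ x, (Real.sqrt ((P.rnDeriv (P + Q)) x).toReal
      - Real.sqrt ((Q.rnDeriv (P + Q)) x).toReal) ^ 2 ∂(P + Q)

/-- The pair `(P, Q)` consists of Borel probability measures on ℝ with means
`mP, mQ` and variances `σP², σQ²`. -/
def MomentConstraints (mP mQ σP σQ : ℝ) (P Q : Measure ℝ) : Prop :=
  IsProbabilityMeasure P ∧ IsProbabilityMeasure Q ∧
  Integrable (fun x => x) P ∧ Integrable (fun x => x ^ 2) P ∧
  Integrable (fun x => x) Q ∧ Integrable (fun x => x ^ 2) Q ∧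
  (∫ x, x ∂P = mP) ∧ (∫ x, (x - mP) ^ 2 ∂P = σP ^ 2) ∧
  (∫ x, x ∂Q = mQ) ∧ (∫ x, (x - mQ) ^ 2 ∂Q = σQ ^ 2)

/-!
Write `p, q` for the densities of `P, Q` with respect to `P + Q`, so that `H²(P, Q) = 1 - c` for
the Bhattacharyya coefficient `c = ∫ √p √q`. Since `∫ (x - m_P) p = 0`, the integral
`∫ (x - m_P) √p √q` equals `∫ (x - m_P) √p (√q - c √p)`, which Cauchy–Schwarz bounds by
`σ_P √(1 - c²)`; likewise for `Q`, and the two integrals differ by `a c`. Hence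
`|a| c ≤ (σ_P + σ_Q) √(1 - c²)`, that is `c² ≤ 1 - a² / (a² + (σ_P + σ_Q)²)`.

Conversely, the moment conditions are met by two measures with weights `p, q` at the same point
`u₁` of a pair `{u₁, u₂}`, and for any such pair, writing `√p = cos α` and `√q = cos β`, one finds
`c = cos (α - β)` with equality above.
-/

theorem sq_integral_mul_le {α : Type*} [MeasurableSpace α] {μ : Measure α} {f g : α → ℝ}
    (hf : MemLp f 2 μ) (hg : MemLp g 2 μ) :
    (∫ x, f x * g x ∂μ) ^ 2 ≤ (∫ x, f x ^ 2 ∂μ) * ∫ x, g x ^ 2 ∂μ := by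
  have hfg : Integrable (fun x => f x * g x) μ := hf.integrable_mul hg
  have hquad : ∀ t : ℝ, 0 ≤ (∫ x, f x ^ 2 ∂μ) * (t * t) + 2 * (∫ x, f x * g x ∂μ) * t
      + ∫ x, g x ^ 2 ∂μ := fun t => by
    calc (0 : ℝ) ≤ ∫ x, (t * f x + g x) ^ 2 ∂μ := integral_nonneg fun x => sq_nonneg _
      _ = ∫ x, (t * t * f x ^ 2 + 2 * t * (f x * g x)) + g x ^ 2 ∂μ := by
          congr 1 with x; ring
      _ = _ := by
          rw [integral_add ((hf.integrable_sq.const_mul _).fun_add (hfg.const_mul _))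
            hg.integrable_sq, integral_add (hf.integrable_sq.const_mul _) (hfg.const_mul _),
            integral_const_mul, integral_const_mul]
          ring
  have := discrim_le_zero hquad
  rw [discrim] at this
  linarith

theorem sq_integral_mul_le_of_integral_mul_eq_zero {α : Type*} [MeasurableSpace α]
    {μ : Measure α} {f u v : α → ℝ} (hf : MemLp f 2 μ) (hu : MemLp u 2 μ) (hv : MemLp v 2 μ)
    (hu1 : ∫ x, u x ^ 2 ∂μ = 1) (hv1 : ∫ x, v x ^ 2 ∂μ = 1) (hfu : ∫ x, f x * u x ∂μ = 0) :
    (∫ x, f x * v x ∂μ) ^ 2 ≤ (∫ x, f x ^ 2 ∂μ) * (1 - (∫ x, u x * v x ∂μ) ^ 2) := by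
  set c := ∫ x, u x * v x ∂μ
  have huv : Integrable (fun x => u x * v x) μ := hu.integrable_mul hv
  have hfu' : Integrable (fun x => f x * u x) μ := hf.integrable_mul hu
  have hfv : Integrable (fun x => f x * v x) μ := hf.integrable_mul hv
  have hfg : ∫ x, f x * (v x - c * u x) ∂μ = ∫ x, f x * v x ∂μ := by
    calc _ = ∫ x, f x * v x - c * (f x * u x) ∂μ := by congr 1 with x; ring
      _ = _ := by
          rw [integral_sub hfv (hfu'.const_mul c), integral_const_mul, hfu, mul_zero, sub_zero]
  have hg2 : ∫ x, (v x - c * u x) ^ 2 ∂μ = 1 - c ^ 2 := by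
    calc _ = ∫ x, (v x ^ 2 - 2 * c * (u x * v x)) + c ^ 2 * u x ^ 2 ∂μ := by
          congr 1 with x; ring
      _ = _ := by
          rw [integral_add (hv.integrable_sq.sub' (huv.const_mul _))
            (hu.integrable_sq.const_mul _), integral_sub hv.integrable_sq (huv.const_mul _),
            integral_const_mul, integral_const_mul, hu1, hv1]
          ring
  rw [← hfg, ← hg2]
  exact sq_integral_mul_le hf (hv.sub (hu.const_mul c))

section Bhattacharyya

variable {α : Type*} [MeasurableSpace α]

noncomputable def geomMeanDensity (P Q : Measure α) (x : α) : ℝ :=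
  √(P.rnDeriv (P + Q) x).toReal * √(Q.rnDeriv (P + Q) x).toReal

noncomputable def bhattacharyya (P Q : Measure α) : ℝ :=
  ∫ x, geomMeanDensity P Q x ∂(P + Q)

lemma geomMeanDensity_comm (P Q : Measure α) : geomMeanDensity Q P = geomMeanDensity P Q := by
  ext x
  rw [geomMeanDensity, geomMeanDensity, add_comm Q P, mul_comm]

lemma bhattacharyya_comm (P Q : Measure α) : bhattacharyya Q P = bhattacharyya P Q := by
  rw [bhattacharyya, geomMeanDensity_comm, add_comm Q P, bhattacharyya]

lemma bhattacharyya_nonneg (P Q : Measure α) : 0 ≤ bhattacharyya P Q :=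
  integral_nonneg fun _ => by unfold geomMeanDensity; positivity

lemma memLp_sqrt_toReal_rnDeriv (μ ν : Measure α) [IsFiniteMeasure μ] :
    MemLp (fun x => √(μ.rnDeriv ν x).toReal) 2 ν := by
  refine (memLp_two_iff_integrable_sq
    (Measure.measurable_rnDeriv μ ν).ennreal_toReal.sqrt.aestronglyMeasurable).2 ?_
  simpa only [sq_sqrt ENNReal.toReal_nonneg] using Measure.integrable_toReal_rnDeriv

lemma toReal_rnDeriv_mul_measureReal_singleton [MeasurableSingletonClass α] {μ ν : Measure α}
    [IsFiniteMeasure μ] [IsFiniteMeasure ν] (h : μ ≪ ν) (x : α) :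
    (μ.rnDeriv ν x).toReal * ν.real {x} = μ.real {x} := by
  have := Measure.setLIntegral_rnDeriv h {x}
  rw [lintegral_singleton] at this
  rw [measureReal_def, measureReal_def, ← ENNReal.toReal_mul, this]

lemma measureReal_singleton_mul_geomMeanDensity [MeasurableSingletonClass α] (P Q : Measure α)
    [IsFiniteMeasure P] [IsFiniteMeasure Q] (x : α) :
    (P + Q).real {x} * geomMeanDensity P Q x = √(P.real {x}) * √(Q.real {x}) := by
  have hP := toReal_rnDeriv_mul_measureReal_singleton (μ := P)
    (Measure.AbsolutelyContinuous.rfl.add_right Q) x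
  have hQ := toReal_rnDeriv_mul_measureReal_singleton (μ := Q)
    (Measure.AbsolutelyContinuous.rfl.add_right' P) x
  rw [← hP, ← hQ, sqrt_mul ENNReal.toReal_nonneg, sqrt_mul ENNReal.toReal_nonneg, geomMeanDensity]
  linear_combination -(√(P.rnDeriv (P + Q) x).toReal * √(Q.rnDeriv (P + Q) x).toReal) *
    (mul_self_sqrt (measureReal_nonneg : 0 ≤ (P + Q).real {x}))

end Bhattacharyya

theorem hellingerSq_nonneg (P Q : Measure ℝ) : 0 ≤ hellingerSq P Q :=
  mul_nonneg (by norm_num) (integral_nonneg fun _ => sq_nonneg _)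

theorem hellingerSq_eq_one_sub_bhattacharyya (P Q : Measure ℝ) [IsProbabilityMeasure P]
    [IsProbabilityMeasure Q] : hellingerSq P Q = 1 - bhattacharyya P Q := by
  have hP : ∫ x, (P.rnDeriv (P + Q) x).toReal ∂(P + Q) = 1 := by
    simp [Measure.integral_toReal_rnDeriv (Measure.AbsolutelyContinuous.rfl.add_right Q)]
  have hQ : ∫ x, (Q.rnDeriv (P + Q) x).toReal ∂(P + Q) = 1 := by
    simp [Measure.integral_toReal_rnDeriv (Measure.AbsolutelyContinuous.rfl.add_right' P)]
  have hexpand : ∀ x, (√(P.rnDeriv (P + Q) x).toReal - √(Q.rnDeriv (P + Q) x).toReal) ^ 2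
      = (P.rnDeriv (P + Q) x).toReal + (Q.rnDeriv (P + Q) x).toReal
        - 2 * geomMeanDensity P Q x := fun x => by
    rw [sub_sq, sq_sqrt ENNReal.toReal_nonneg, sq_sqrt ENNReal.toReal_nonneg, geomMeanDensity]
    ring
  have hw : Integrable (geomMeanDensity P Q) (P + Q) :=
    (memLp_sqrt_toReal_rnDeriv P _).integrable_mul (memLp_sqrt_toReal_rnDeriv Q _)
  rw [hellingerSq, funext hexpand, integral_sub (Measure.integrable_toReal_rnDeriv.fun_add
    Measure.integrable_toReal_rnDeriv) (hw.const_mul 2), integral_add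
    Measure.integrable_toReal_rnDeriv Measure.integrable_toReal_rnDeriv, hP, hQ,
    integral_const_mul, bhattacharyya]
  ring

theorem bhattacharyya_le_one (P Q : Measure ℝ) [IsProbabilityMeasure P]
    [IsProbabilityMeasure Q] : bhattacharyya P Q ≤ 1 := by
  linarith [hellingerSq_nonneg P Q, hellingerSq_eq_one_sub_bhattacharyya P Q]

section Moments

variable {P Q : Measure ℝ} [IsProbabilityMeasure P] [IsProbabilityMeasure Q]

lemma memLp_sub_mul_sqrt_toReal_rnDeriv (hP : MemLp (fun x => x) 2 P) (m : ℝ) :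
    MemLp (fun x => (x - m) * √(P.rnDeriv (P + Q) x).toReal) 2 (P + Q) := by
  have hmeas : Measurable fun x => (x - m) * √(P.rnDeriv (P + Q) x).toReal := by
    have := Measure.measurable_rnDeriv P (P + Q)
    fun_prop
  rw [memLp_two_iff_integrable_sq hmeas.aestronglyMeasurable]
  have h : Integrable (fun x => (x - m) ^ 2) P := (hP.sub (memLp_const m)).integrable_sq
  refine ((integrable_toReal_rnDeriv_mul_iff
    (Measure.AbsolutelyContinuous.rfl.add_right Q)).2 h).congr (ae_of_all _ fun x => ?_)
  simp only [mul_pow, sq_sqrt ENNReal.toReal_nonneg]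
  ring

lemma integrable_sub_mul_geomMeanDensity (hP : MemLp (fun x => x) 2 P) (m : ℝ) :
    Integrable (fun x => (x - m) * geomMeanDensity P Q x) (P + Q) :=
  ((memLp_sub_mul_sqrt_toReal_rnDeriv hP m).integrable_mul
    (memLp_sqrt_toReal_rnDeriv Q _)).congr (ae_of_all _ fun _ => mul_assoc _ _ _)

lemma sq_integral_sub_mul_geomMeanDensity_le (hP : MemLp (fun x => x) 2 P) {m : ℝ}
    (hm : ∫ x, x ∂P = m) :
    (∫ x, (x - m) * geomMeanDensity P Q x ∂(P + Q)) ^ 2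
      ≤ (∫ x, (x - m) ^ 2 ∂P) * (1 - bhattacharyya P Q ^ 2) := by
  have hPν : P ≪ P + Q := Measure.AbsolutelyContinuous.rfl.add_right Q
  have hQν : Q ≪ P + Q := Measure.AbsolutelyContinuous.rfl.add_right' P
  have hsq_sqrt : ∀ (μ : Measure ℝ) x, √(μ.rnDeriv (P + Q) x).toReal ^ 2
      = (μ.rnDeriv (P + Q) x).toReal := fun _ _ => sq_sqrt ENNReal.toReal_nonneg
  have key := sq_integral_mul_le_of_integral_mul_eq_zero
    (memLp_sub_mul_sqrt_toReal_rnDeriv (Q := Q) hP m) (memLp_sqrt_toReal_rnDeriv P (P + Q))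
    (memLp_sqrt_toReal_rnDeriv Q (P + Q))
    (by simp [hsq_sqrt, Measure.integral_toReal_rnDeriv hPν])
    (by simp [hsq_sqrt, Measure.integral_toReal_rnDeriv hQν]) ?_
  · simpa only [mul_assoc, mul_pow, hsq_sqrt, mul_comm _ (P.rnDeriv (P + Q) _).toReal,
      integral_toReal_rnDeriv_mul hPν, geomMeanDensity, bhattacharyya] using key
  · calc ∫ x, (x - m) * √(P.rnDeriv (P + Q) x).toReal * √(P.rnDeriv (P + Q) x).toReal ∂(P + Q)
        = ∫ x, (P.rnDeriv (P + Q) x).toReal * (x - m) ∂(P + Q) := by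
          congr 1 with x
          rw [mul_assoc, mul_self_sqrt ENNReal.toReal_nonneg, mul_comm]
      _ = 0 := by
          rw [integral_toReal_rnDeriv_mul hPν, integral_sub (hP.integrable one_le_two)
            (integrable_const m), hm]
          simp

theorem bhattacharyya_sq_mul_le (hP : MemLp (fun x => x) 2 P) (hQ : MemLp (fun x => x) 2 Q)
    {mP mQ σP σQ : ℝ} (hmP : ∫ x, x ∂P = mP) (hmQ : ∫ x, x ∂Q = mQ)
    (hvP : ∫ x, (x - mP) ^ 2 ∂P = σP ^ 2) (hvQ : ∫ x, (x - mQ) ^ 2 ∂Q = σQ ^ 2)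
    (hσP : 0 ≤ σP) (hσQ : 0 ≤ σQ) :
    bhattacharyya P Q ^ 2 * ((mP - mQ) ^ 2 + (σP + σQ) ^ 2) ≤ (σP + σQ) ^ 2 := by
  have hc₀ : 0 ≤ bhattacharyya P Q := bhattacharyya_nonneg P Q
  have hc₁ : bhattacharyya P Q ≤ 1 := bhattacharyya_le_one P Q
  set c := bhattacharyya P Q with hc
  have hJP : |∫ x, (x - mP) * geomMeanDensity P Q x ∂(P + Q)| ≤ σP * √(1 - c ^ 2) := by
    refine abs_le_of_sq_le_sq ?_ (by positivity)
    rw [mul_pow, sq_sqrt (by nlinarith), ← hvP]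
    exact sq_integral_sub_mul_geomMeanDensity_le hP hmP
  have hJQ : |∫ x, (x - mQ) * geomMeanDensity P Q x ∂(P + Q)| ≤ σQ * √(1 - c ^ 2) := by
    refine abs_le_of_sq_le_sq ?_ (by positivity)
    rw [mul_pow, sq_sqrt (by nlinarith), ← hvQ]
    have := sq_integral_sub_mul_geomMeanDensity_le (Q := P) hQ hmQ
    rwa [geomMeanDensity_comm, add_comm Q P, bhattacharyya_comm] at this
  have hdiff : (mP - mQ) * c = ∫ x, (x - mQ) * geomMeanDensity P Q x ∂(P + Q)
      - ∫ x, (x - mP) * geomMeanDensity P Q x ∂(P + Q) := by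
    rw [hc, bhattacharyya]
    have hIQ := integrable_sub_mul_geomMeanDensity (Q := P) hQ mQ
    rw [geomMeanDensity_comm, add_comm Q P] at hIQ
    rw [← integral_sub hIQ (integrable_sub_mul_geomMeanDensity hP mP), ← integral_const_mul]
    congr 1 with x
    ring
  have hlin : |mP - mQ| * c ≤ (σP + σQ) * √(1 - c ^ 2) := by
    rw [← abs_of_nonneg hc₀, ← abs_mul, hdiff, abs_of_nonneg hc₀]
    linarith [abs_sub _ _ |>.trans (add_le_add hJQ hJP)]
  have := pow_le_pow_left₀ (by positivity) hlin 2
  rw [mul_pow, mul_pow, sq_abs, sq_sqrt (by nlinarith)] at this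
  linarith

end Moments

theorem one_sub_sqrt_le_hellingerSq {mP mQ σP σQ : ℝ} {P Q : Measure ℝ}
    (h : MomentConstraints mP mQ σP σQ P Q) (hne : mP ≠ mQ) (hσP : 0 ≤ σP) (hσQ : 0 ≤ σQ) :
    1 - √(1 - (mP - mQ) ^ 2 / ((mP - mQ) ^ 2 + (σP + σQ) ^ 2)) ≤ hellingerSq P Q := by
  obtain ⟨hPp, hQp, -, hx2P, -, hx2Q, hmP, hvP, hmQ, hvQ⟩ := h
  have hpos : 0 < (mP - mQ) ^ 2 + (σP + σQ) ^ 2 := by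
    have := sub_ne_zero.2 hne
    positivity
  have hbound := bhattacharyya_sq_mul_le
    ((memLp_two_iff_integrable_sq measurable_id.aestronglyMeasurable).2 hx2P)
    ((memLp_two_iff_integrable_sq measurable_id.aestronglyMeasurable).2 hx2Q)
    hmP hmQ hvP hvQ hσP hσQ
  rw [hellingerSq_eq_one_sub_bhattacharyya, one_sub_div hpos.ne', add_sub_cancel_left,
    sub_le_sub_iff_left, Real.le_sqrt (bhattacharyya_nonneg P Q) (by positivity),
    le_div_iff₀ hpos]
  exact hbound

noncomputable def twoPoint (p u₁ u₂ : ℝ) : Measure ℝ :=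
  ENNReal.ofReal p • Measure.dirac u₁ + ENNReal.ofReal (1 - p) • Measure.dirac u₂

section TwoPoint

variable {p u₁ u₂ : ℝ}

lemma twoPoint_compl_pair (p u₁ u₂ : ℝ) : twoPoint p u₁ u₂ {u₁, u₂}ᶜ = 0 := by
  simp [twoPoint]

lemma isProbabilityMeasure_twoPoint (hp₀ : 0 ≤ p) (hp₁ : p ≤ 1) :
    IsProbabilityMeasure (twoPoint p u₁ u₂) :=
  ⟨by simp [twoPoint, ← ENNReal.ofReal_add hp₀ (sub_nonneg.2 hp₁)]⟩

lemma integrable_twoPoint (f : ℝ → ℝ) : Integrable f (twoPoint p u₁ u₂) :=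
  ((integrable_dirac enorm_lt_top).smul_measure ENNReal.ofReal_ne_top).add_measure
    ((integrable_dirac enorm_lt_top).smul_measure ENNReal.ofReal_ne_top)

lemma integral_twoPoint (hp₀ : 0 ≤ p) (hp₁ : p ≤ 1) (f : ℝ → ℝ) :
    ∫ x, f x ∂twoPoint p u₁ u₂ = p * f u₁ + (1 - p) * f u₂ := by
  rw [twoPoint, integral_add_measure ((integrable_dirac enorm_lt_top).smul_measure
    ENNReal.ofReal_ne_top) ((integrable_dirac enorm_lt_top).smul_measure ENNReal.ofReal_ne_top),
    integral_smul_measure, integral_smul_measure, integral_dirac, integral_dirac,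
    ENNReal.toReal_ofReal hp₀, ENNReal.toReal_ofReal (sub_nonneg.2 hp₁), smul_eq_mul, smul_eq_mul]

lemma twoPoint_real_singleton_left (hu : u₁ ≠ u₂) (hp₀ : 0 ≤ p) :
    (twoPoint p u₁ u₂).real {u₁} = p := by
  simp [twoPoint, measureReal_def, hu, hp₀]

lemma twoPoint_real_singleton_right (hu : u₁ ≠ u₂) (hp₁ : p ≤ 1) :
    (twoPoint p u₁ u₂).real {u₂} = 1 - p := by
  simp [twoPoint, measureReal_def, hu.symm, hp₁]

theorem bhattacharyya_twoPoint {q : ℝ} (hu : u₁ ≠ u₂) (hp₀ : 0 ≤ p) (hp₁ : p ≤ 1) (hq₀ : 0 ≤ q)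
    (hq₁ : q ≤ 1) :
    bhattacharyya (twoPoint p u₁ u₂) (twoPoint q u₁ u₂) = √p * √q + √(1 - p) * √(1 - q) := by
  have := isProbabilityMeasure_twoPoint (u₁ := u₁) (u₂ := u₂) hp₀ hp₁
  have := isProbabilityMeasure_twoPoint (u₁ := u₁) (u₂ := u₂) hq₀ hq₁
  have h₁ := measureReal_singleton_mul_geomMeanDensity (twoPoint p u₁ u₂) (twoPoint q u₁ u₂) u₁
  have h₂ := measureReal_singleton_mul_geomMeanDensity (twoPoint p u₁ u₂) (twoPoint q u₁ u₂) u₂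
  rw [measureReal_add_apply, twoPoint_real_singleton_left hu hp₀,
    twoPoint_real_singleton_left hu hq₀] at h₁
  rw [measureReal_add_apply, twoPoint_real_singleton_right hu hp₁,
    twoPoint_real_singleton_right hu hq₁] at h₂
  rw [bhattacharyya, integral_add_measure (integrable_twoPoint _) (integrable_twoPoint _),
    integral_twoPoint hp₀ hp₁, integral_twoPoint hq₀ hq₁]
  linear_combination h₁ + h₂

theorem momentConstraints_twoPoint {mP mQ σP σQ q : ℝ} (hp₀ : 0 ≤ p) (hp₁ : p ≤ 1)
    (hq₀ : 0 ≤ q) (hq₁ : q ≤ 1) (hmP : p * u₁ + (1 - p) * u₂ = mP)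
    (hmQ : q * u₁ + (1 - q) * u₂ = mQ) (hvP : p * (1 - p) * (u₁ - u₂) ^ 2 = σP ^ 2)
    (hvQ : q * (1 - q) * (u₁ - u₂) ^ 2 = σQ ^ 2) :
    MomentConstraints mP mQ σP σQ (twoPoint p u₁ u₂) (twoPoint q u₁ u₂) := by
  refine ⟨isProbabilityMeasure_twoPoint hp₀ hp₁, isProbabilityMeasure_twoPoint hq₀ hq₁,
    integrable_twoPoint _, integrable_twoPoint _, integrable_twoPoint _, integrable_twoPoint _,
    ?_, ?_, ?_, ?_⟩ <;>
    simp only [integral_twoPoint hp₀ hp₁, integral_twoPoint hq₀ hq₁]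
  · exact hmP
  · rw [← hvP, ← hmP]; ring
  · exact hmQ
  · rw [← hvQ, ← hmQ]; ring

end TwoPoint

-- With `(A, B) = (cos α, sin α)` and `(C, D) = (cos β, sin β)` this reads
-- `cos² (α - β) · sin² (α + β) = (sin (α + β) cos (α - β))²`.
theorem inner_sq_mul_eq_of_unit_vectors {A B C D d : ℝ} (h₁ : A ^ 2 + B ^ 2 = 1)
    (h₂ : C ^ 2 + D ^ 2 = 1) :
    (A * C + B * D) ^ 2 * (((A ^ 2 - C ^ 2) * d) ^ 2 + ((A * B + C * D) * d) ^ 2)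
      = ((A * B + C * D) * d) ^ 2 := by
  have hsum : (A ^ 2 - C ^ 2) ^ 2 + (A * B + C * D) ^ 2 = (A * D + B * C) ^ 2 := by
    linear_combination (A ^ 2 - C ^ 2) * h₁ - (A ^ 2 - C ^ 2) * h₂
  have hprod : A * B + C * D = (A * C + B * D) * (A * D + B * C) := by
    linear_combination -(C * D) * h₁ - A * B * h₂
  calc _ = (A * C + B * D) ^ 2 * ((A ^ 2 - C ^ 2) ^ 2 + (A * B + C * D) ^ 2) * d ^ 2 := by ring
    _ = ((A * C + B * D) * (A * D + B * C) * d) ^ 2 := by rw [hsum]; ring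
    _ = _ := by rw [← hprod]

theorem exists_twoPoint_weights {a σP σQ : ℝ} (ha : a ≠ 0) :
    ∃ p q d : ℝ, 0 ≤ p ∧ p ≤ 1 ∧ 0 ≤ q ∧ q ≤ 1 ∧ (p - q) * d = a ∧
      p * (1 - p) * d ^ 2 = σP ^ 2 ∧ q * (1 - q) * d ^ 2 = σQ ^ 2 := by
  set E := √((a ^ 2 + (σP + σQ) ^ 2) * (a ^ 2 + (σP - σQ) ^ 2))
  have hE2 : E ^ 2 = (a ^ 2 + (σP + σQ) ^ 2) * (a ^ 2 + (σP - σQ) ^ 2) := sq_sqrt (by positivity)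
  have hE : 0 < E := sqrt_pos.2 (by positivity)
  set t := a ^ 2 + σQ ^ 2 - σP ^ 2
  set t' := a ^ 2 - σQ ^ 2 + σP ^ 2
  have htP : E ^ 2 - t ^ 2 = 4 * a ^ 2 * σP ^ 2 := by rw [hE2]; ring
  have htQ : E ^ 2 - t' ^ 2 = 4 * a ^ 2 * σQ ^ 2 := by rw [hE2]; ring
  obtain ⟨ht₁, ht₂⟩ := abs_le_of_sq_le_sq' (by nlinarith : t ^ 2 ≤ E ^ 2) hE.le
  obtain ⟨ht'₁, ht'₂⟩ := abs_le_of_sq_le_sq' (by nlinarith : t' ^ 2 ≤ E ^ 2) hE.le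
  refine ⟨(E + t) / (2 * E), (E - t') / (2 * E), E / a,
    div_nonneg (by linarith) (by positivity), ?_, ?_, ?_, ?_, ?_, ?_⟩
  · rw [div_le_one (by positivity)]; linarith
  · exact div_nonneg (by linarith) (by positivity)
  · rw [div_le_one (by positivity)]; linarith
  · field_simp; ring
  · rw [← mul_left_cancel_iff_of_pos (by positivity : (0 : ℝ) < 4 * a ^ 2), ← htP]
    field_simp
    ring
  · rw [← mul_left_cancel_iff_of_pos (by positivity : (0 : ℝ) < 4 * a ^ 2), ← htQ]
    field_simp
    ring

theorem exists_twoPoint_hellingerSq_eq {mP mQ σP σQ : ℝ} (hne : mP ≠ mQ) (hσP : 0 ≤ σP)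
    (hσQ : 0 ≤ σQ) :
    ∃ P Q : Measure ℝ, MomentConstraints mP mQ σP σQ P Q ∧
      (∃ u₁ u₂ : ℝ, P (({u₁, u₂} : Set ℝ)ᶜ) = 0 ∧ Q (({u₁, u₂} : Set ℝ)ᶜ) = 0) ∧
      hellingerSq P Q = 1 - √(1 - (mP - mQ) ^ 2 / ((mP - mQ) ^ 2 + (σP + σQ) ^ 2)) := by
  obtain ⟨p, q, d, hp₀, hp₁, hq₀, hq₁, ha, hvP, hvQ⟩ := exists_twoPoint_weights (sub_ne_zero.2 hne)
    (σP := σP) (σQ := σQ)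
  have hd : d ≠ 0 := by
    rintro rfl
    exact hne (sub_eq_zero.1 (by simpa using ha.symm))
  set u₂ := mP - p * d
  have hu : u₂ + d ≠ u₂ := by simpa using hd
  have := isProbabilityMeasure_twoPoint (u₁ := u₂ + d) (u₂ := u₂) hp₀ hp₁
  have := isProbabilityMeasure_twoPoint (u₁ := u₂ + d) (u₂ := u₂) hq₀ hq₁
  refine ⟨twoPoint p (u₂ + d) u₂, twoPoint q (u₂ + d) u₂,
    momentConstraints_twoPoint hp₀ hp₁ hq₀ hq₁ (by ring) (by linear_combination -ha)
      (by rw [add_sub_cancel_left]; exact hvP) (by rw [add_sub_cancel_left]; exact hvQ),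
    ⟨_, _, twoPoint_compl_pair _ _ _, twoPoint_compl_pair _ _ _⟩, ?_⟩
  rw [hellingerSq_eq_one_sub_bhattacharyya, bhattacharyya_twoPoint hu hp₀ hp₁ hq₀ hq₁]
  congr 1
  have hpos : 0 < (mP - mQ) ^ 2 + (σP + σQ) ^ 2 := by
    have := sub_ne_zero.2 hne
    positivity
  have hσP' : σP = √p * √(1 - p) * |d| := by
    rw [← sq_eq_sq₀ hσP (by positivity), mul_pow, mul_pow, sq_sqrt hp₀, sq_sqrt (by linarith),
      sq_abs, hvP]
  have hσQ' : σQ = √q * √(1 - q) * |d| := by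
    rw [← sq_eq_sq₀ hσQ (by positivity), mul_pow, mul_pow, sq_sqrt hq₀, sq_sqrt (by linarith),
      sq_abs, hvQ]
  have hm : (mP - mQ) ^ 2 = ((√p ^ 2 - √q ^ 2) * |d|) ^ 2 := by
    rw [sq_sqrt hp₀, sq_sqrt hq₀, mul_pow, sq_abs, ← mul_pow, ha]
  have key := inner_sq_mul_eq_of_unit_vectors (A := √p) (B := √(1 - p)) (C := √q)
    (D := √(1 - q)) (d := |d|) (by rw [sq_sqrt hp₀, sq_sqrt (by linarith)]; ring)
    (by rw [sq_sqrt hq₀, sq_sqrt (by linarith)]; ring)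
  rw [add_mul, ← hσP', ← hσQ', ← hm] at key
  rw [one_sub_div hpos.ne', add_sub_cancel_left, (div_eq_iff hpos.ne').2 key.symm,
    sqrt_sq (by positivity)]

theorem hellinger_inf_attained
    (mP mQ σP σQ : ℝ) (hne : mP ≠ mQ) (hσP : 0 ≤ σP) (hσQ : 0 ≤ σQ)
    (a : ℝ) (ha : a = mP - mQ) :
    sInf { h : ℝ | ∃ P Q : Measure ℝ, MomentConstraints mP mQ σP σQ P Q ∧
        h = hellingerSq P Q } =
      1 - Real.sqrt (1 - a ^ 2 / (a ^ 2 + (σP + σQ) ^ 2)) ∧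
    ∃ P Q : Measure ℝ, MomentConstraints mP mQ σP σQ P Q ∧
      (∃ u₁ u₂ : ℝ, P (({u₁, u₂} : Set ℝ)ᶜ) = 0 ∧ Q (({u₁, u₂} : Set ℝ)ᶜ) = 0) ∧
      hellingerSq P Q = 1 - Real.sqrt (1 - a ^ 2 / (a ^ 2 + (σP + σQ) ^ 2)) := by
  subst ha
  obtain ⟨P, Q, hPQ, hsupp, hval⟩ := exists_twoPoint_hellingerSq_eq hne hσP hσQ
  refine ⟨IsLeast.csInf_eq ⟨⟨P, Q, hPQ, hval.symm⟩, ?_⟩, P, Q, hPQ, hsupp, hval⟩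
  rintro _ ⟨P', Q', hPQ', rfl⟩
  exact one_sub_sqrt_le_hellingerSq hPQ' hne hσP hσQ
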